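/- In the repair setup below, suppose for each j ∈ A a nonzero vector u_j ∈ W_j is given with W_j = S_j ⊕ span(u_j). If scalars ξ_j ∈ 𝔽_q and vectors s_j ∈ S_j (j ∈ A) satisfy ∑_{j∈A}(ξ_j u_j + s_j) = 0 and ξ_ℓ u_ℓ + s_ℓ ≠ 0 for at least one ℓ ∈ A, then ξ_j ≠ 0 for every j ∈ A. -/

import Mathlib

/-!
Suppose `ξ j = 0`. Replacing the node `W j` by its repair subspace `S j` still gives `k`
subspaces spanning the whole space: data recovery for `{x} ∪ A ∖ {j}` gives
`W x + ∑_{i ≠ j} W i = 𝓕`, and `W x ≤ ∑ S i ≤ S j + ∑_{i ≠ j} W i` by node repair.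
Their dimensions add up to at most `(k - 1) + (k - 1) k = k² - 1 = dim 𝓕`, so the sum is
direct. The relation `∑ (ξ i • u i + s i) = 0` has its `j`-th term `s j ∈ S j` and its other
terms in `W i`, so directness forces every term to vanish.
-/

/-- An `(card ι, k, d)` linear exact-repair regeneration code with parameters
`(α, β, F)` over a field `K`: an `F`-dimensional ambient space `V` with node
subspaces `W i` of dimension at most `α`, such that any `k` nodes span `V`
(data recovery), and any node can be repaired from any `d` other nodes, each
contributing a subspace of dimension at most `β` (node repair). -/
def IsERCode {K : Type} [Field K] {V : Type} [AddCommGroup V] [Module K V]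
    {ι : Type} (k d α β F : ℕ) (W : ι → Submodule K V) : Prop :=
  FiniteDimensional K V ∧
  Module.finrank K V = F ∧
  (∀ i, Module.finrank K (W i) ≤ α) ∧
  (∀ A : Finset ι, A.card = k → ∑ j ∈ A, W j = ⊤) ∧
  (∀ (x : ι) (A : Finset ι), x ∉ A → A.card = d →
    ∃ S : ι → Submodule K V,
      (∀ j ∈ A, S j ≤ W j ∧ Module.finrank K (S j) ≤ β) ∧
      W x ≤ ∑ j ∈ A, S j)

/-- Append a new node `Wst` to the family `W`, giving a family indexed by `Option ι`. -/
def extendCode {K : Type} [Field K] {V : Type} [AddCommGroup V] [Module K V]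
    {ι : Type} (W : ι → Submodule K V) (Wst : Submodule K V) :
    Option ι → Submodule K V :=
  fun o => o.elim Wst W

open Module

namespace Submodule

variable {K V ι : Type} [Field K] [AddCommGroup V] [Module K V] [FiniteDimensional K V]

theorem finrank_finsetSum_le (s : Finset ι) (U : ι → Submodule K V) :
    finrank K ↥(∑ i ∈ s, U i) ≤ ∑ i ∈ s, finrank K (U i) := by
  classical
  induction s using Finset.induction with
  | empty => exact (finrank_eq_zero.mpr rfl).le
  | insert a t ha ih =>
    rw [Finset.sum_insert ha, Finset.sum_insert ha]
    exact (finrank_add_le_finrank_add_finrank _ _).trans (Nat.add_le_add_left ih _)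

theorem eq_zero_of_finsetSum_eq_zero_of_sum_finrank_le (s : Finset ι) (U : ι → Submodule K V)
    (hdim : ∑ i ∈ s, finrank K (U i) ≤ finrank K ↥(∑ i ∈ s, U i))
    (v : ι → V) (hv : ∀ i ∈ s, v i ∈ U i) (hsum : ∑ i ∈ s, v i = 0) :
    ∀ i ∈ s, v i = 0 := by
  classical
  induction s using Finset.induction with
  | empty => simp
  | insert a t ha ih =>
    rw [Finset.sum_insert ha, Finset.sum_insert ha, add_eq_sup] at hdim
    rw [Finset.sum_insert ha] at hsum
    have hdim_t := finrank_finsetSum_le t U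
    have hinf : finrank K ↥(U a ⊓ ∑ i ∈ t, U i) = 0 := by
      have := finrank_sup_add_finrank_inf_eq (U a) (∑ i ∈ t, U i)
      omega
    have hva_mem : v a ∈ U a ⊓ ∑ i ∈ t, U i :=
      ⟨hv a (Finset.mem_insert_self a t), by
        rw [eq_neg_of_add_eq_zero_left hsum]
        exact neg_mem (sum_mem fun i hi => Finset.single_le_sum (f := U) (fun _ _ => zero_le) hi
          (hv i (Finset.mem_insert_of_mem hi)))⟩
    have hva : v a = 0 := by simpa [finrank_eq_zero.mp hinf] using hva_mem
    have hvt : ∀ i ∈ t, v i = 0 :=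
      ih (by have := finrank_add_le_finrank_add_finrank (U a) (∑ i ∈ t, U i); omega)
        (fun i hi => hv i (Finset.mem_insert_of_mem hi)) (by simpa [hva] using hsum)
    simpa [hva] using hvt

end Submodule

section Update

variable {K V ι : Type} [Field K] [AddCommGroup V] [Module K V] [DecidableEq ι]
  {W S : ι → Submodule K V} {j : ι} {A : Finset ι}

theorem sum_finrank_update_of_mem (hj : j ∈ A) (P : Submodule K V) :
    ∑ i ∈ A, finrank K (Function.update W j P i) =
      finrank K P + ∑ i ∈ A.erase j, finrank K (W i) := by
  simp_rw [Function.apply_update (fun _ (p : Submodule K V) => finrank K p)]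
  rw [Finset.sum_update_of_mem hj, Finset.sdiff_singleton_eq_erase]

theorem sum_update_eq_top_of_repair {x : ι} (hj : j ∈ A) (hSW : ∀ i ∈ A, S i ≤ W i)
    (hrep : W x ≤ ∑ i ∈ A, S i) (hrec : W x ⊔ ∑ i ∈ A.erase j, W i = ⊤) :
    ∑ i ∈ A, Function.update W j (S j) i = ⊤ := by
  have hsplit : ∑ i ∈ A, Function.update W j (S j) i = S j ⊔ ∑ i ∈ A.erase j, W i := by
    rw [Finset.sum_update_of_mem hj, Finset.sdiff_singleton_eq_erase, Submodule.add_eq_sup]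
  have hS_le : ∑ i ∈ A, S i ≤ S j ⊔ ∑ i ∈ A.erase j, W i := by
    rw [← Finset.add_sum_erase A _ hj, Submodule.add_eq_sup]
    exact sup_le_sup_left (Finset.sum_le_sum fun i hi => hSW i (Finset.mem_of_mem_erase hi)) _
  rw [hsplit, eq_top_iff, ← hrec]
  exact sup_le (hrep.trans hS_le) le_sup_right

end Update

theorem stmt9_general {K : Type} [Field K] {V : Type} [AddCommGroup V] [Module K V]
    (n k : ℕ)
    (W : Fin n → Submodule K V)
    (hW : IsERCode k k k (k - 1) (k ^ 2 - 1) W)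
    (x : Fin n) (A : Finset (Fin n)) (hx : x ∉ A) (hA : A.card = k)
    (S : Fin n → Submodule K V)
    (hSW : ∀ j ∈ A, S j ≤ W j)
    (hSdim : ∀ j ∈ A, Module.finrank K (S j) ≤ k - 1)
    (hrep : W x ≤ ∑ j ∈ A, S j)
    (u : Fin n → V)
    (huW : ∀ j ∈ A, u j ∈ W j)
    (ξ : Fin n → K) (s : Fin n → V) (hs : ∀ j ∈ A, s j ∈ S j)
    (hsum : ∑ j ∈ A, (ξ j • u j + s j) = 0)
    (hnz : ∃ ℓ ∈ A, ξ ℓ • u ℓ + s ℓ ≠ 0) :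
    ∀ j ∈ A, ξ j ≠ 0 := by
  obtain ⟨_, hF, hα, hrec, -⟩ := hW
  intro j hj hξj
  obtain ⟨ℓ, hℓ, hne⟩ := hnz
  have hcard : (A.erase j).card = k - 1 := by rw [Finset.card_erase_of_mem hj, hA]
  have hrec_j : W x ⊔ ∑ i ∈ A.erase j, W i = ⊤ := by
    have hxA : x ∉ A.erase j := fun h => hx (Finset.mem_of_mem_erase h)
    have hk : 0 < k := hA ▸ Finset.card_pos.mpr ⟨j, hj⟩
    rw [← Submodule.add_eq_sup, ← Finset.sum_insert hxA]
    exact hrec _ (by rw [Finset.card_insert_of_notMem hxA, hcard]; omega)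
  have hdim : ∑ i ∈ A, finrank K (Function.update W j (S j) i) ≤ finrank K V := calc
    _ ≤ (k - 1) + (k - 1) * k := by
      grw [sum_finrank_update_of_mem hj, hSdim j hj,
        Finset.sum_le_card_nsmul _ _ k fun i _ => hα i, hcard, smul_eq_mul]
    _ = (k + 1) * (k - 1) := by ring
    _ = finrank K V := by simpa [hF] using (Nat.sq_sub_sq k 1).symm
  have hmem : ∀ i ∈ A, ξ i • u i + s i ∈ Function.update W j (S j) i := by
    intro i hi
    rcases eq_or_ne i j with rfl | hij
    · simpa [hξj] using hs i hi
    · simpa [Function.update_of_ne hij] using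
        add_mem (Submodule.smul_mem _ _ (huW i hi)) (hSW i hi (hs i hi))
  refine hne (Submodule.eq_zero_of_finsetSum_eq_zero_of_sum_finrank_le A _ ?_ _ hmem hsum ℓ hℓ)
  rwa [sum_update_eq_top_of_repair hj hSW hrep hrec_j, finrank_top]

/-- in the repair setup, given nonzero `u j ∈ W j` with
`W j = S j ⊕ span {u j}` for each `j ∈ A`, if scalars `ξ j` and vectors `s j ∈ S j`
satisfy `∑ j ∈ A, (ξ j • u j + s j) = 0` with at least one summand nonzero, then
`ξ j ≠ 0` for every `j ∈ A`. -/
theorem stmt9 {K : Type} [Field K] {V : Type} [AddCommGroup V] [Module K V]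
    (n k : ℕ) (hk : 2 ≤ k) (hn : k + 1 ≤ n)
    (W : Fin n → Submodule K V)
    (hW : IsERCode k k k (k - 1) (k ^ 2 - 1) W)
    (x : Fin n) (A : Finset (Fin n)) (hx : x ∉ A) (hA : A.card = k)
    (S : Fin n → Submodule K V)
    (hSW : ∀ j ∈ A, S j ≤ W j)
    (hSdim : ∀ j ∈ A, Module.finrank K (S j) ≤ k - 1)
    (hrep : W x ≤ ∑ j ∈ A, S j)
    (u : Fin n → V)
    (hu0 : ∀ j ∈ A, u j ≠ 0) (huW : ∀ j ∈ A, u j ∈ W j)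
    (huds : ∀ j ∈ A, Disjoint (S j) (Submodule.span K {u j}) ∧
      S j ⊔ Submodule.span K {u j} = W j)
    (ξ : Fin n → K) (s : Fin n → V) (hs : ∀ j ∈ A, s j ∈ S j)
    (hsum : ∑ j ∈ A, (ξ j • u j + s j) = 0)
    (hnz : ∃ ℓ ∈ A, ξ ℓ • u ℓ + s ℓ ≠ 0) :
    ∀ j ∈ A, ξ j ≠ 0 :=
  stmt9_general n k W hW x A hx hA S hSW hSdim hrep u huW ξ s hs hsum hnz
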